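/- Under the hypotheses of the exponential-condition barrier function (B ≤ 0 on the initial set X₀, B > 0 on the unsafe set X_u, and ∇B · F − λB ≤ 0 on X), any trajectory of ẋ = F(x) starting in X₀ and remaining in X never enters X_u. -/

import Mathlib

/-!
Along a trajectory, `g t = B (x t)` satisfies `g' ≤ λ g`. Hence `exp (-λ t) * g t` is
non-increasing, so `g t ≤ exp (λ t) * g 0 ≤ 0`, whereas `B > 0` on the unsafe set.
-/

open Real Set

theorem le_exp_mul_of_hasDerivAt_le_mul {g g' : ℝ → ℝ} {lam : ℝ}
    (hg : ∀ t, 0 ≤ t → HasDerivAt g (g' t) t) (hle : ∀ t, 0 ≤ t → g' t ≤ lam * g t)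
    {t : ℝ} (ht : 0 ≤ t) : g t ≤ exp (lam * t) * g 0 := by
  set h : ℝ → ℝ := fun s => exp (-lam * s) * g s
  have hh : ∀ s, 0 ≤ s →
      HasDerivAt h (exp (-lam * s) * (-lam) * g s + exp (-lam * s) * g' s) s := fun s hs => by
    have hexp := ((hasDerivAt_id s).const_mul (-lam)).exp
    simp only [id, mul_one] at hexp
    exact hexp.mul (hg s hs)
  have hanti : AntitoneOn h (Ici 0) := by
    refine antitoneOn_of_hasDerivWithinAt_nonpos (convex_Ici 0)
      (fun s hs => (hh s hs).continuousAt.continuousWithinAt)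
      (fun s hs => (hh s (le_of_lt (by simpa using hs))).hasDerivWithinAt) fun s hs => ?_
    have hs : 0 ≤ s := le_of_lt (by simpa using hs)
    have hpos := exp_pos (-lam * s)
    nlinarith [hle s hs]
  have hdecay : h t ≤ h 0 := hanti self_mem_Ici ht ht
  have hprod : exp (lam * t) * exp (-lam * t) = 1 := by rw [← exp_add]; simp
  calc g t = exp (lam * t) * h t := by simp only [h]; rw [← mul_assoc, hprod, one_mul]
    _ ≤ exp (lam * t) * h 0 := by gcongr
    _ = exp (lam * t) * g 0 := by simp [h]

theorem barrier_certificate_safety_general {n : ℕ}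
    (F : (Fin n → ℝ) → (Fin n → ℝ))
    (B : (Fin n → ℝ) → ℝ) (hB : ContDiff ℝ 1 B)
    (X X₀ Xu : Set (Fin n → ℝ)) (lam : ℝ)
    (hinit : ∀ y ∈ X₀, B y ≤ 0)
    (hunsafe : ∀ y ∈ Xu, 0 < B y)
    (hcond : ∀ y ∈ X, fderiv ℝ B y (F y) - lam * B y ≤ 0)
    (x : ℝ → (Fin n → ℝ))
    (hx : ∀ t, 0 ≤ t → HasDerivAt x (F (x t)) t)
    (hxX : ∀ t, 0 ≤ t → x t ∈ X)
    (h0 : x 0 ∈ X₀) :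
    ∀ t, 0 ≤ t → x t ∉ Xu := by
  intro t ht hunsafe_t
  have hderiv : ∀ s, 0 ≤ s → HasDerivAt (B ∘ x) (fderiv ℝ B (x s) (F (x s))) s :=
    fun s hs => (hB.differentiable one_ne_zero (x s)).hasFDerivAt.comp_hasDerivAt s (hx s hs)
  have hbound : B (x t) ≤ exp (lam * t) * B (x 0) :=
    le_exp_mul_of_hasDerivAt_le_mul hderiv
      (fun s hs => by simpa [sub_nonpos] using hcond (x s) (hxX s hs)) ht
  have hnonpos : B (x t) ≤ 0 :=
    hbound.trans (mul_nonpos_of_nonneg_of_nonpos (exp_pos _).le (hinit _ h0))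
  exact (hunsafe _ hunsafe_t).not_ge hnonpos

/-- Safety via an exponential-condition barrier certificate: if `B ≤ 0` on the
initial set `X₀`, `B > 0` on the unsafe set `X_u`, and `∇B · F − λB ≤ 0` on
`X`, then any trajectory of `ẋ = F(x)` starting in `X₀` and remaining in `X`
never enters `X_u`. -/
theorem barrier_certificate_safety {n : ℕ}
    (F : (Fin n → ℝ) → (Fin n → ℝ)) (hF : LocallyLipschitz F)
    (B : (Fin n → ℝ) → ℝ) (hB : ContDiff ℝ 1 B)
    (X X₀ Xu : Set (Fin n → ℝ)) (hX₀ : X₀ ⊆ X) (hXu : Xu ⊆ X) (lam : ℝ)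
    (hinit : ∀ y ∈ X₀, B y ≤ 0)
    (hunsafe : ∀ y ∈ Xu, 0 < B y)
    (hcond : ∀ y ∈ X, fderiv ℝ B y (F y) - lam * B y ≤ 0)
    (x : ℝ → (Fin n → ℝ))
    (hx : ∀ t, 0 ≤ t → HasDerivAt x (F (x t)) t)
    (hxX : ∀ t, 0 ≤ t → x t ∈ X)
    (h0 : x 0 ∈ X₀) :
    ∀ t, 0 ≤ t → x t ∉ Xu :=
  barrier_certificate_safety_general F B hB X X₀ Xu lam hinit hunsafe hcond x hx hxX h0
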